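/- arXiv:1108.2743 — 2 statements merged into one kernel-verified Lean document; each statement's English description precedes it below -/
import Mathlib

section
/- Let {X_n, n ≥ 0} be a Markov chain with kernel P adapted to filtration {ℱ_n}, and let Λ be defined from a symmetric function G as Λ(x₁, x₂; y₁, y₂) = G(y₁, y₂) − PG(x₂, y₁) − PG(x₁, y₂) + P²G(x₁, x₂), with all integrals finite. For 1 ≤ j < ℓ set Q_{ℓ,j} := Λ(X_{j−1}, X_{ℓ−1}; X_j, X_ℓ). Then E[Q_{ℓ,j} | ℱ_{ℓ−1}] = 0 almost surely, so that { Σ_{j=1}^{ℓ−1} Q_{ℓ,j}, ℱ_ℓ }_{ℓ≥2} is a martingale-difference array. -/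
open MeasureTheory ProbabilityTheory ENNReal Filter

noncomputable section

/-- `PG(a,b) = ∫ P(a,dz) G(z,b)`. -/
def PGfun {X : Type*} [MeasurableSpace X] (P : Kernel X X) (G : X → X → ℝ) (a b : X) : ℝ :=
  ∫ z, G z b ∂(P a)

/-- `P²G(a,b) = ∫ P(a,dz₁) ∫ P(b,dz₂) G(z₁,z₂)`. -/
def P2Gfun {X : Type*} [MeasurableSpace X] (P : Kernel X X) (G : X → X → ℝ) (a b : X) : ℝ :=
  ∫ z₁, (∫ z₂, G z₁ z₂ ∂(P b)) ∂(P a)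

/-- `Λ(x₁,x₂; y₁,y₂) = G(y₁,y₂) − PG(x₂,y₁) − PG(x₁,y₂) + P²G(x₁,x₂)`. -/
def Lam {X : Type*} [MeasurableSpace X] (P : Kernel X X) (G : X → X → ℝ)
    (x₁ x₂ y₁ y₂ : X) : ℝ :=
  G y₁ y₂ - PGfun P G x₂ y₁ - PGfun P G x₁ y₂ + P2Gfun P G x₁ x₂

/-!
Conditioning on `𝓕_{ℓ-1}` freezes `X_{j-1}`, `X_{ℓ-1}` and `X_j` (all `𝓕_{ℓ-1}`-measurable as
`j ≤ ℓ - 1`), so by the Markov property `E[Q_{ℓ,j} | 𝓕_{ℓ-1}]` is `∫ P(x₂,dz) Λ(x₁,x₂; y₁,z)`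
evaluated at these values. This integral vanishes: integrating out `z` turns `G(y₁,z)` into
`PG(x₂,y₁)` by symmetry of `G`, and `PG(x₁,z)` into `P²G(x₁,x₂)` by Fubini, while the two
remaining terms are constant in `z` and `P(x₂,·)` is a probability measure.
-/

section Kernel

variable {X : Type*} [MeasurableSpace X] (P : Kernel X X) (G : X → X → ℝ)

theorem measurable_uncurry_PGfun [IsSFiniteKernel P] (hG : Measurable (Function.uncurry G)) :
    Measurable (Function.uncurry (PGfun P G)) := by
  have h : Measurable (Function.uncurry fun (ab : X × X) (z : X) => G z ab.2) :=
    hG.comp (measurable_snd.prodMk measurable_fst.snd)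
  simpa [Function.uncurry_def, PGfun, Kernel.comap_apply] using
    (h.stronglyMeasurable.integral_kernel_prod_right
      (κ := P.comap Prod.fst measurable_fst)).measurable

theorem measurable_uncurry_P2Gfun [IsSFiniteKernel P] (hG : Measurable (Function.uncurry G)) :
    Measurable (Function.uncurry (P2Gfun P G)) := by
  have hG' : Measurable (Function.uncurry fun u v => G v u) := hG.comp measurable_swap
  have hPG : Measurable (Function.uncurry fun z b => PGfun P (fun u v => G v u) b z) :=
    (measurable_uncurry_PGfun P _ hG').comp measurable_swap
  simpa [Function.uncurry_def, PGfun, P2Gfun] using measurable_uncurry_PGfun P _ hPG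

theorem measurable_uncurry_Lam [IsSFiniteKernel P] (hG : Measurable (Function.uncurry G)) :
    Measurable fun x : X × X × X × X => Lam P G x.1 x.2.1 x.2.2.1 x.2.2.2 := by
  have hPG := measurable_uncurry_PGfun P G hG
  have hP2G := measurable_uncurry_P2Gfun P G hG
  unfold Lam
  fun_prop

variable {P G}

theorem integrable_PGfun [IsSFiniteKernel P] {a b : X}
    (hG : Integrable (fun q : X × X => G q.1 q.2) ((P a).prod (P b))) :
    Integrable (PGfun P G a) (P b) :=
  hG.integral_prod_right

theorem integral_PGfun_eq_P2Gfun [IsSFiniteKernel P] {a b : X}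
    (hG : Integrable (fun q : X × X => G q.1 q.2) ((P a).prod (P b))) :
    ∫ z, PGfun P G a z ∂(P b) = P2Gfun P G a b :=
  (integral_integral_swap hG).symm

theorem integral_Lam_right_eq_zero [IsMarkovKernel P] (hGsym : ∀ x y, G x y = G y x)
    {x₁ x₂ y₁ : X} (h₁ : Integrable (fun z => G z y₁) (P x₂))
    (h₂ : Integrable (fun q : X × X => G q.1 q.2) ((P x₁).prod (P x₂))) :
    ∫ z, Lam P G x₁ x₂ y₁ z ∂(P x₂) = 0 := by
  have hG : Integrable (fun z => G y₁ z) (P x₂) := h₁.congr (ae_of_all _ fun z => hGsym z y₁)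
  have hGint : ∫ z, G y₁ z ∂(P x₂) = PGfun P G x₂ y₁ :=
    integral_congr_ae (ae_of_all _ fun z => hGsym y₁ z)
  have hPG := integrable_PGfun h₂
  have hGPG : Integrable (fun z => G y₁ z - PGfun P G x₁ z) (P x₂) := hG.sub hPG
  calc ∫ z, Lam P G x₁ x₂ y₁ z ∂(P x₂)
      = ∫ z, (G y₁ z - PGfun P G x₁ z) + (P2Gfun P G x₁ x₂ - PGfun P G x₂ y₁) ∂(P x₂) := by
        congr 1 with z; unfold Lam; ring
    _ = (PGfun P G x₂ y₁ - P2Gfun P G x₁ x₂) + (P2Gfun P G x₁ x₂ - PGfun P G x₂ y₁) := by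
        rw [integral_add hGPG (integrable_const _), integral_sub hG hPG, hGint,
          integral_PGfun_eq_P2Gfun h₂, integral_const, probReal_univ, one_smul]
    _ = 0 := by ring

end Kernel

theorem stmt_8_general {Ω S : Type*} [MeasurableSpace S] {mΩ : MeasurableSpace Ω}
    (Pr : Measure Ω) (𝓕 : Filtration ℕ mΩ)
    (P : Kernel S S) [IsMarkovKernel P]
    (X : ℕ → Ω → S) (hadapt : ∀ n, Measurable[𝓕 n] (X n))
    (G : S → S → ℝ) (hGm : Measurable (Function.uncurry G))
    (hGsym : ∀ x y, G x y = G y x)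
    (hint1 : ∀ a b : S, Integrable (fun z => G z b) (P a))
    (hint2 : ∀ a b : S, Integrable (fun q : S × S => G q.1 q.2) ((P a).prod (P b)))
    (hMarkov : ∀ ℓ : ℕ, 1 ≤ ℓ → ∀ F : Ω → S → ℝ,
      Measurable[(𝓕 (ℓ - 1)).prod inferInstance] (fun p : Ω × S => F p.1 p.2) →
      Integrable (fun ω => F ω (X ℓ ω)) Pr →
      Pr[(fun ω => F ω (X ℓ ω)) | 𝓕 (ℓ - 1)]
        =ᵐ[Pr] fun ω => ∫ z, F ω z ∂(P (X (ℓ - 1) ω)))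
    (hQint : ∀ ℓ j : ℕ,
      Integrable (fun ω => Lam P G (X (j - 1) ω) (X (ℓ - 1) ω) (X j ω) (X ℓ ω)) Pr) :
    ∀ ℓ j : ℕ, 1 ≤ j → j < ℓ →
      Pr[(fun ω => Lam P G (X (j - 1) ω) (X (ℓ - 1) ω) (X j ω) (X ℓ ω)) | 𝓕 (ℓ - 1)]
        =ᵐ[Pr] 0 := by
  intro ℓ j hj hjℓ
  -- from here on, `Measurable` on `Ω` refers to `𝓕 (ℓ - 1)`
  let _ : MeasurableSpace Ω := 𝓕 (ℓ - 1)
  have hX : ∀ i ≤ ℓ - 1, Measurable (X i) := fun i hi => (hadapt i).mono (𝓕.mono hi) le_rfl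
  have hF : Measurable fun p : Ω × S =>
      Lam P G (X (j - 1) p.1) (X (ℓ - 1) p.1) (X j p.1) p.2 :=
    (measurable_uncurry_Lam P G hGm).comp <|
      ((hX (j - 1) (by omega)).comp measurable_fst).prodMk <|
        ((hX (ℓ - 1) le_rfl).comp measurable_fst).prodMk <|
          ((hX j (by omega)).comp measurable_fst).prodMk measurable_snd
  filter_upwards [hMarkov ℓ (by omega) _ hF (hQint ℓ j)] with ω hω
  exact hω.trans (integral_Lam_right_eq_zero hGsym (hint1 _ _) (hint2 _ _))

/-- For a Markov chain `{X_n}` adapted to `𝓕` with kernel `P`, the increments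
`Q_{ℓ,j} = Λ(X_{j−1}, X_{ℓ−1}; X_j, X_ℓ)` satisfy `E[Q_{ℓ,j} | 𝓕_{ℓ−1}] = 0` a.s. for
`1 ≤ j < ℓ`, so `{Σ_{j<ℓ} Q_{ℓ,j}, 𝓕_ℓ}` is a martingale-difference array. -/
theorem stmt_8 {Ω S : Type*} [MeasurableSpace S] {mΩ : MeasurableSpace Ω}
    (Pr : Measure Ω) [IsProbabilityMeasure Pr] (𝓕 : Filtration ℕ mΩ)
    (P : Kernel S S) [IsMarkovKernel P]
    (X : ℕ → Ω → S) (hadapt : ∀ n, Measurable[𝓕 n] (X n))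
    (G : S → S → ℝ) (hGm : Measurable (Function.uncurry G))
    (hGsym : ∀ x y, G x y = G y x)
    (hint1 : ∀ a b : S, Integrable (fun z => G z b) (P a))
    (hint2 : ∀ a b : S, Integrable (fun q : S × S => G q.1 q.2) ((P a).prod (P b)))
    (hMarkov : ∀ ℓ : ℕ, 1 ≤ ℓ → ∀ F : Ω → S → ℝ,
      Measurable[(𝓕 (ℓ - 1)).prod inferInstance] (fun p : Ω × S => F p.1 p.2) →
      Integrable (fun ω => F ω (X ℓ ω)) Pr →
      Pr[(fun ω => F ω (X ℓ ω)) | 𝓕 (ℓ - 1)]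
        =ᵐ[Pr] fun ω => ∫ z, F ω z ∂(P (X (ℓ - 1) ω)))
    (hQint : ∀ ℓ j : ℕ,
      Integrable (fun ω => Lam P G (X (j - 1) ω) (X (ℓ - 1) ω) (X j ω) (X ℓ ω)) Pr) :
    ∀ ℓ j : ℕ, 1 ≤ j → j < ℓ →
      Pr[(fun ω => Lam P G (X (j - 1) ω) (X (ℓ - 1) ω) (X j ω) (X ℓ ω)) | 𝓕 (ℓ - 1)]
        =ᵐ[Pr] 0 :=
  stmt_8_general Pr 𝓕 P X hadapt G hGm hGsym hint1 hint2 hMarkov hQint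
end
end

section
/- Let {X_n} be a Markov chain with kernel P and invariant probability μ, h ∈ L_{V₁} with μ(h) = 0, Σ_{k≥0}‖P^k(x,·) − μ‖_{V₁} ≤ cV₂(x), and G = Σ_{j≥0}P^j h. If the chain starts from stationarity (X₀ ∼ μ) and μ(V₂²) < ∞, then the asymptotic variance σ²(h) := Var_μ(h(X₀)) + 2Σ_{ℓ≥1} Cov_μ(h(X₀), h(X_ℓ)) is finite and satisfies σ²(h) = ∫ μ(dx) ∫ P(x, dy) (G(y) − PG(x))². -/
open MeasureTheory ProbabilityTheory ENNReal Filter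
noncomputable section

/-- The `W`-norm of a signed measure: `∫ W d|ν|`. -/
def Wnorm {X : Type*} [MeasurableSpace X] (W : X → ℝ) (ν : SignedMeasure X) : ℝ≥0∞ :=
  ∫⁻ x, ENNReal.ofReal (W x) ∂ ν.totalVariation

/-- Integral of a function against a signed measure. -/
def sInt {X : Type*} [MeasurableSpace X] (ν : SignedMeasure X) (f : X → ℝ) : ℝ :=
  (∫ x, f x ∂ ν.toJordanDecomposition.posPart) - (∫ x, f x ∂ ν.toJordanDecomposition.negPart)

/-- The product of two finite signed measures, via Jordan decompositions. -/
def prodSM {X Y : Type*} [MeasurableSpace X] [MeasurableSpace Y]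
    (a : SignedMeasure X) (b : SignedMeasure Y) : SignedMeasure (X × Y) :=
  (a.toJordanDecomposition.posPart.prod b.toJordanDecomposition.posPart
    + a.toJordanDecomposition.negPart.prod b.toJordanDecomposition.negPart).toSignedMeasure
  - (a.toJordanDecomposition.posPart.prod b.toJordanDecomposition.negPart
    + a.toJordanDecomposition.negPart.prod b.toJordanDecomposition.posPart).toSignedMeasure

/-- Iterates of a Markov kernel: `kiter P 0 = id`, `kiter P (n+1) (x, ·) = ∫ P(x,dz) kiter P n (z, ·)`. -/
def kiter {X : Type*} [MeasurableSpace X] (P : Kernel X X) : ℕ → Kernel X X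
  | 0 => Kernel.id
  | n + 1 => (kiter P n) ∘ₖ P

instance kiter.instIsMarkovKernel {X : Type*} [MeasurableSpace X] (P : Kernel X X)
    [IsMarkovKernel P] (n : ℕ) : IsMarkovKernel (kiter P n) := by
  induction n with
  | zero => rw [kiter]; infer_instance
  | succ n ih => rw [kiter]; infer_instance

/-- The signed measure `Pⁿ(x,·) − μ`. -/
def dSM {X : Type*} [MeasurableSpace X] (P : Kernel X X) [IsMarkovKernel P]
    (μ : Measure X) [IsProbabilityMeasure μ] (n : ℕ) (x : X) : SignedMeasure X :=
  ((kiter P n) x).toSignedMeasure - μ.toSignedMeasure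


/-- The Poisson-equation solution `G(x) = Σ_{j≥0} Pʲh(x)`. -/
def Gfun {X : Type*} [MeasurableSpace X] (P : Kernel X X) [IsMarkovKernel P]
    (h : X → ℝ) (x : X) : ℝ :=
  ∑' j : ℕ, ∫ z, h z ∂((kiter P j) x)


/-! Write `g n := Pⁿh`. Since `μ(h) = 0`, `g n x` is the integral of `h` against `Pⁿ(x,·) − μ`, so
the short-range dependence condition gives `Σₙ |g n x| ≤ M c V₂(x)`. Hence `G = Σₙ g n` satisfies
`|G|, |h| ≤ const · V₂ ∈ L²(μ)` and solves the Poisson equation `PG = G − h` (μ-a.e.). Dominated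
convergence sums the covariance series to `μ(h (G − h))`, while by invariance of `μ`
`∫ μ(dx) Var_{P(x,·)}(G) = μ(G²) − μ((PG)²) = μ(G²) − μ((G − h)²) = μ(h²) + 2 μ(h (G − h))`. -/

namespace AsymptoticVariance

variable {X : Type*} [MeasurableSpace X]

section Summation

theorem measurable_tsum_of_summable {f : ℕ → X → ℝ} (hf : ∀ n, Measurable (f n))
    (hs : ∀ x, Summable fun n => f n x) : Measurable fun x => ∑' n, f n x :=
  measurable_of_tendsto_metrizable
    (fun n => Finset.measurable_sum (Finset.range n) fun i _ => hf i)
    (tendsto_pi_nhds.2 fun x => (hs x).hasSum.tendsto_sum_nat)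

theorem hasSum_integral_of_tsum_abs_le {ν : Measure X} {f : ℕ → X → ℝ} {W : X → ℝ}
    (hf : ∀ n, Measurable (f n)) (hs : ∀ x, Summable fun n => |f n x|)
    (hW : Integrable W ν) (hle : ∀ x, ∑' n, |f n x| ≤ W x) :
    HasSum (fun n => ∫ x, f n x ∂ν) (∫ x, ∑' n, f n x ∂ν) := by
  have hbound : Integrable (fun x => ∑' n, |f n x|) ν :=
    hW.mono' (measurable_tsum_of_summable (fun n => (hf n).abs) hs).aestronglyMeasurable
      (ae_of_all _ fun x => by
        rw [Real.norm_of_nonneg (tsum_nonneg fun n => abs_nonneg _)]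
        exact hle x)
  exact hasSum_integral_of_dominated_convergence (fun n x => |f n x|)
    (fun n => (hf n).aestronglyMeasurable) (fun _ => ae_of_all _ fun _ => le_rfl)
    (ae_of_all _ hs) hbound (ae_of_all _ fun x => (hs x).of_abs.hasSum)

theorem summable_abs_and_tsum_le_of_le_toReal {u : ℕ → ℝ} {a : ℕ → ℝ≥0∞} {M b : ℝ}
    (hM : 0 ≤ M) (hb : 0 ≤ b) (hu : ∀ n, |u n| ≤ M * (a n).toReal)
    (ha : ∑' n, a n ≤ ENNReal.ofReal b) :
    Summable (fun n => |u n|) ∧ ∑' n, |u n| ≤ M * b := by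
  have ha_ne_top : ∑' n, a n ≠ ⊤ := ne_top_of_le_ne_top ofReal_ne_top ha
  have hsa : Summable fun n => M * (a n).toReal :=
    (ENNReal.summable_toReal ha_ne_top).mul_left M
  have hsu : Summable fun n => |u n| := .of_nonneg_of_le (fun n => abs_nonneg _) hu hsa
  refine ⟨hsu, ?_⟩
  calc ∑' n, |u n| ≤ ∑' n, M * (a n).toReal := hsu.tsum_le_tsum hu hsa
    _ = M * (∑' n, a n).toReal := by
      rw [tsum_mul_left, ENNReal.tsum_toReal_eq fun n =>
        ne_top_of_le_ne_top ha_ne_top (ENNReal.le_tsum n)]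
    _ ≤ M * b := by
      gcongr
      exact ENNReal.toReal_le_of_le_ofReal hb ha

theorem abs_head_add_tsum_succ_le {u : ℕ → ℝ} {b : ℝ} (hs : Summable fun n => |u n|)
    (hb : ∑' n, |u n| ≤ b) : |u 0| + ∑' n, |u (n + 1)| ≤ b := by
  rwa [← hs.tsum_eq_zero_add]

end Summation

section Domination

variable {ξ : Measure X} {f V : X → ℝ} {M : ℝ}

theorem integrable_of_abs_le_mul (hV : Integrable V ξ) (hf : Measurable f)
    (hfV : ∀ x, |f x| ≤ M * V x) : Integrable f ξ :=
  (hV.const_mul M).mono' hf.aestronglyMeasurable (ae_of_all _ hfV)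

theorem memLp_of_abs_le_mul {p : ℝ≥0∞} (hV : MemLp V p ξ) (hf : AEStronglyMeasurable f ξ)
    (hfV : ∀ x, |f x| ≤ M * V x) : MemLp f p ξ :=
  (hV.const_mul M).of_le hf (ae_of_all _ fun x => (hfV x).trans (le_abs_self _))

end Domination

section Jordan

variable {α β : Measure X} [IsFiniteMeasure α] [IsFiniteMeasure β] {V : X → ℝ}

theorem add_negPart_eq_add_posPart :
    α + (α.toSignedMeasure - β.toSignedMeasure).toJordanDecomposition.negPart
      = β + (α.toSignedMeasure - β.toSignedMeasure).toJordanDecomposition.posPart := by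
  rw [← Measure.toSignedMeasure_eq_toSignedMeasure_iff, Measure.toSignedMeasure_add,
    Measure.toSignedMeasure_add, add_comm β.toSignedMeasure, ← sub_eq_sub_iff_add_eq_add]
  exact (SignedMeasure.toSignedMeasure_toJordanDecomposition _).symm

theorem integrable_totalVariation_of_Wnorm_ne_top {ν : SignedMeasure X} (hV : Measurable V)
    (hV0 : ∀ x, 0 ≤ V x) (hW : Wnorm V ν ≠ ⊤) : Integrable V ν.totalVariation :=
  ⟨hV.aestronglyMeasurable,
    (hasFiniteIntegral_iff_ofReal (ae_of_all _ hV0)).2 (lt_top_iff_ne_top.2 hW)⟩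

theorem toReal_Wnorm_eq_integral {ν : SignedMeasure X} (hV : Measurable V)
    (hV0 : ∀ x, 0 ≤ V x) (hW : Wnorm V ν ≠ ⊤) :
    (Wnorm V ν).toReal = ∫ x, V x ∂ν.totalVariation := by
  rw [Wnorm, ← ofReal_integral_eq_lintegral_ofReal
    (integrable_totalVariation_of_Wnorm_ne_top hV hV0 hW) (ae_of_all _ hV0),
    toReal_ofReal (integral_nonneg hV0)]

theorem integrable_of_Wnorm_sub_ne_top (hV : Measurable V) (hV0 : ∀ x, 0 ≤ V x)
    (hβ : Integrable V β) (hW : Wnorm V (α.toSignedMeasure - β.toSignedMeasure) ≠ ⊤) :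
    Integrable V α := by
  have hpos := (integrable_add_measure.1
    (integrable_totalVariation_of_Wnorm_ne_top hV hV0 hW)).1
  have hsum := hβ.add_measure hpos
  rw [← add_negPart_eq_add_posPart] at hsum
  exact (integrable_add_measure.1 hsum).1

theorem abs_integral_sub_le_Wnorm {f : X → ℝ} {M : ℝ} (hf : Measurable f) (hV : Measurable V)
    (hV0 : ∀ x, 0 ≤ V x) (hfV : ∀ x, |f x| ≤ M * V x) (hβ : Integrable V β)
    (hW : Wnorm V (α.toSignedMeasure - β.toSignedMeasure) ≠ ⊤) :
    |∫ x, f x ∂α - ∫ x, f x ∂β|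
      ≤ M * (Wnorm V (α.toSignedMeasure - β.toSignedMeasure)).toReal := by
  set ν := α.toSignedMeasure - β.toSignedMeasure
  obtain ⟨hp, hq⟩ := integrable_add_measure.1
    (integrable_totalVariation_of_Wnorm_ne_top hV hV0 hW)
  have hα := integrable_of_Wnorm_sub_ne_top hV hV0 hβ hW
  have hdiff : ∫ x, f x ∂α - ∫ x, f x ∂β
      = ∫ x, f x ∂ν.toJordanDecomposition.posPart
        - ∫ x, f x ∂ν.toJordanDecomposition.negPart := by
    have key := congrArg (fun ξ => ∫ x, f x ∂ξ) (add_negPart_eq_add_posPart (α := α) (β := β))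
    rw [integral_add_measure (integrable_of_abs_le_mul hα hf hfV)
        (integrable_of_abs_le_mul hq hf hfV),
      integral_add_measure (integrable_of_abs_le_mul hβ hf hfV)
        (integrable_of_abs_le_mul hp hf hfV)] at key
    linarith
  have habs : ∀ {ξ : Measure X}, Integrable V ξ → |∫ x, f x ∂ξ| ≤ ∫ x, M * V x ∂ξ :=
    fun hξ => abs_integral_le_integral_abs.trans <| integral_mono_of_nonneg
      (ae_of_all _ fun _ => abs_nonneg _) (hξ.const_mul M) (ae_of_all _ hfV)
  rw [hdiff, toReal_Wnorm_eq_integral hV hV0 hW, SignedMeasure.totalVariation,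
    integral_add_measure hp hq, mul_add, ← integral_const_mul, ← integral_const_mul]
  exact (abs_sub _ _).trans (add_le_add (habs hp) (habs hq))

end Jordan

section Invariant

variable {P : Kernel X X} {μ : Measure X} {f : X → ℝ}

theorem ae_integrable_of_invariant (hinv : μ.bind (fun x => P x) = μ) (hf : Integrable f μ) :
    ∀ᵐ x ∂μ, Integrable f (P x) := by
  rw [← hinv] at hf
  exact Measure.ae_integrable_of_integrable_comp hf

theorem integral_integral_of_invariant (hinv : μ.bind (fun x => P x) = μ)
    (hf : Integrable f μ) : ∫ x, ∫ y, f y ∂P x ∂μ = ∫ x, f x ∂μ := by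
  rw [← hinv, Measure.comp_eq_comp_const_apply] at hf
  conv_rhs => rw [← hinv, Measure.comp_eq_comp_const_apply, Kernel.integral_comp hf]
  rw [Kernel.const_apply]

theorem integral_variance_of_invariant [IsMarkovKernel P] (hinv : μ.bind (fun x => P x) = μ)
    (hf : Measurable f) (hf2 : Integrable (fun x => f x ^ 2) μ)
    (hPf2 : Integrable (fun x => (∫ y, f y ∂P x) ^ 2) μ) :
    ∫ x, Var[f; P x] ∂μ = ∫ x, f x ^ 2 ∂μ - ∫ x, (∫ y, f y ∂P x) ^ 2 ∂μ := by
  have hvar : ∀ᵐ x ∂μ, Var[f; P x] = ∫ y, f y ^ 2 ∂P x - (∫ y, f y ∂P x) ^ 2 := by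
    filter_upwards [ae_integrable_of_invariant hinv hf2] with x hx
    rw [variance_eq_sub ((memLp_two_iff_integrable_sq hf.aestronglyMeasurable).2 hx)]
    rfl
  have hPf2' : Integrable (fun x => ∫ y, f y ^ 2 ∂P x) μ := by
    rw [← hinv] at hf2
    simpa using Measure.integrable_integral_norm_of_integrable_comp hf2
  rw [integral_congr_ae hvar, integral_sub hPf2' hPf2, integral_integral_of_invariant hinv hf2]

end Invariant

section Iterates

variable {P : Kernel X X} {f : X → ℝ}

theorem integral_kiter_zero (hf : Measurable f) (x : X) : ∫ y, f y ∂(kiter P 0 x) = f x := by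
  rw [kiter, Kernel.id_apply, integral_dirac' f x hf.stronglyMeasurable]

theorem integral_kiter_succ {n : ℕ} {x : X} (hf : Integrable f (kiter P (n + 1) x)) :
    ∫ y, f y ∂(kiter P (n + 1) x) = ∫ z, ∫ y, f y ∂(kiter P n z) ∂P x :=
  Kernel.integral_comp hf

theorem measurable_integral_kiter (hf : Measurable f) (n : ℕ) :
    Measurable fun x => ∫ y, f y ∂(kiter P n x) :=
  hf.stronglyMeasurable.integral_kernel.measurable

end Iterates

section Drift

variable {P : Kernel X X} [IsMarkovKernel P] {μ : Measure X} [IsProbabilityMeasure μ]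
  {V : X → ℝ} {h : X → ℝ} {M : ℝ}

theorem Wnorm_dSM_ne_top {c : ℝ} {V' : X → ℝ}
    (hSRD : ∀ x, ∑' k : ℕ, Wnorm V (dSM P μ k x) ≤ ENNReal.ofReal (c * V' x)) (n : ℕ) (x : X) :
    Wnorm V (dSM P μ n x) ≠ ⊤ :=
  ne_top_of_le_ne_top ofReal_ne_top ((ENNReal.le_tsum n).trans (hSRD x))

theorem integrable_kiter (hV : Measurable V) (hV0 : ∀ x, 0 ≤ V x) (hVμ : Integrable V μ)
    (hm : Measurable h) (hM : ∀ x, |h x| ≤ M * V x) {n : ℕ} {x : X}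
    (hW : Wnorm V (dSM P μ n x) ≠ ⊤) : Integrable h (kiter P n x) :=
  integrable_of_abs_le_mul (integrable_of_Wnorm_sub_ne_top hV hV0 hVμ hW) hm hM

theorem abs_integral_kiter_le (hV : Measurable V) (hV0 : ∀ x, 0 ≤ V x) (hVμ : Integrable V μ)
    (hm : Measurable h) (hM : ∀ x, |h x| ≤ M * V x) (hmean : ∫ x, h x ∂μ = 0) {n : ℕ} {x : X}
    (hW : Wnorm V (dSM P μ n x) ≠ ⊤) :
    |∫ y, h y ∂(kiter P n x)| ≤ M * (Wnorm V (dSM P μ n x)).toReal := by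
  have key := abs_integral_sub_le_Wnorm (α := kiter P n x) hm hV hV0 hM hVμ hW
  rwa [hmean, sub_zero] at key

theorem summable_abs_integral_kiter {V' : X → ℝ} {c : ℝ} (hV : Measurable V)
    (hV1 : ∀ x, 1 ≤ V x) (hVV' : ∀ x, V x ≤ V' x) (hVμ : Integrable V μ) (hm : Measurable h)
    (hM : ∀ x, |h x| ≤ M * V x) (hmean : ∫ x, h x ∂μ = 0)
    (hSRD : ∀ x, ∑' k : ℕ, Wnorm V (dSM P μ k x) ≤ ENNReal.ofReal (c * V' x)) (x : X) :
    Summable (fun n => |∫ y, h y ∂(kiter P n x)|)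
      ∧ ∑' n, |∫ y, h y ∂(kiter P n x)| ≤ M * max c 0 * V' x := by
  have hV0 : ∀ x, 0 ≤ V x := fun x => zero_le_one.trans (hV1 x)
  have hM0 : 0 ≤ M := by nlinarith [abs_nonneg (h x), hM x, hV1 x]
  have hV'0 : 0 ≤ V' x := (hV0 x).trans (hVV' x)
  rw [mul_assoc]
  refine summable_abs_and_tsum_le_of_le_toReal hM0 (by positivity)
    (fun n => abs_integral_kiter_le hV hV0 hVμ hm hM hmean (Wnorm_dSM_ne_top hSRD n x))
    ((hSRD x).trans (ofReal_le_ofReal ?_))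
  exact mul_le_mul_of_nonneg_right (le_max_left c 0) hV'0

end Drift

section PoissonEquation

variable {P : Kernel X X} {μ : Measure X} {g : ℕ → X → ℝ} {V : X → ℝ} {K : ℝ}

theorem ae_integral_tsum_eq_tsum_sub (hinv : μ.bind (fun x => P x) = μ) (hg : ∀ n, Measurable (g n))
    (hsucc : ∀ n x, g (n + 1) x = ∫ y, g n y ∂P x) (hs : ∀ x, Summable fun n => |g n x|)
    (hle : ∀ x, ∑' n, |g n x| ≤ K * V x) (hV : Integrable V μ) :
    ∀ᵐ x ∂μ, ∫ y, ∑' n, g n y ∂P x = ∑' n, g n x - g 0 x := by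
  filter_upwards [ae_integrable_of_invariant hinv hV] with x hVx
  have key := hasSum_integral_of_tsum_abs_le hg hs (hVx.const_mul K) hle
  simp_rw [← hsucc] at key
  rw [← key.tsum_eq, (hs x).of_abs.tsum_eq_zero_add, add_sub_cancel_left]

theorem hasSum_integral_mul_succ (hg : ∀ n, Measurable (g n))
    (hs : ∀ x, Summable fun n => |g n x|) (hle : ∀ x, ∑' n, |g n x| ≤ K * V x)
    (hV : MemLp V 2 μ) :
    HasSum (fun n => ∫ x, g 0 x * g (n + 1) x ∂μ) (∫ x, g 0 x * (∑' n, g n x - g 0 x) ∂μ) := by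
  have hs' : ∀ x, Summable fun n => |g (n + 1) x| := fun x => (summable_nat_add_iff 1).2 (hs x)
  have habs : ∀ x, ∑' n, |g 0 x * g (n + 1) x| = |g 0 x| * ∑' n, |g (n + 1) x| := fun x => by
    simp_rw [abs_mul, tsum_mul_left]
  have key := hasSum_integral_of_tsum_abs_le (f := fun n x => g 0 x * g (n + 1) x)
    (fun n => (hg 0).mul (hg (n + 1)))
    (fun x => by simpa only [abs_mul] using (hs' x).mul_left |g 0 x|)
    (hV.integrable_sq.const_mul (K ^ 2)) (fun x => by
      have hsum := abs_head_add_tsum_succ_le (hs x) (hle x)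
      have hnonneg : 0 ≤ ∑' n, |g (n + 1) x| := tsum_nonneg fun n => abs_nonneg _
      rw [habs]
      nlinarith [abs_nonneg (g 0 x)])
  have hsub : ∀ x, ∑' n, g n x - g 0 x = ∑' n, g (n + 1) x := fun x => by
    rw [(hs x).of_abs.tsum_eq_zero_add, add_sub_cancel_left]
  simpa only [tsum_mul_left, hsub] using key

theorem integral_integral_sq_sub_eq [IsMarkovKernel P] [IsProbabilityMeasure μ]
    (hinv : μ.bind (fun x => P x) = μ) (hg : ∀ n, Measurable (g n))
    (hsucc : ∀ n x, g (n + 1) x = ∫ y, g n y ∂P x)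
    (hs : ∀ x, Summable fun n => |g n x|) (hle : ∀ x, ∑' n, |g n x| ≤ K * V x)
    (hV : MemLp V 2 μ) :
    ∫ x, ∫ y, (∑' n, g n y - ∫ z, ∑' n, g n z ∂P x) ^ 2 ∂P x ∂μ
      = ∫ x, g 0 x ^ 2 ∂μ + 2 * ∫ x, g 0 x * (∑' n, g n x - g 0 x) ∂μ := by
  set G := fun x => ∑' n, g n x
  have hGm : Measurable G := measurable_tsum_of_summable hg fun x => (hs x).of_abs
  have hGL2 : MemLp G 2 μ := memLp_of_abs_le_mul hV hGm.aestronglyMeasurable fun x =>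
    (norm_tsum_le_tsum_norm (f := fun n => g n x) (hs x)).trans (hle x)
  have hg0L2 : MemLp (g 0) 2 μ := memLp_of_abs_le_mul hV (hg 0).aestronglyMeasurable fun x =>
    le_of_add_le_of_nonneg_left (abs_head_add_tsum_succ_le (hs x) (hle x))
      (tsum_nonneg fun n => abs_nonneg _)
  have hPG := ae_integral_tsum_eq_tsum_sub hinv hg hsucc hs hle (hV.integrable one_le_two)
  have hsq : Integrable (fun x => (G x - g 0 x) ^ 2) μ := (hGL2.sub hg0L2).integrable_sq
  have hprod : Integrable (fun x => g 0 x * (G x - g 0 x)) μ :=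
    hg0L2.integrable_mul (hGL2.sub hg0L2)
  have hPG2 : ∀ᵐ x ∂μ, (∫ y, G y ∂P x) ^ 2 = (G x - g 0 x) ^ 2 :=
    hPG.mono fun x hx => by rw [hx]
  calc ∫ x, ∫ y, (G y - ∫ z, G z ∂P x) ^ 2 ∂P x ∂μ = ∫ x, Var[G; P x] ∂μ :=
        integral_congr_ae (ae_of_all _ fun x => (variance_eq_integral hGm.aemeasurable).symm)
    _ = ∫ x, G x ^ 2 ∂μ - ∫ x, (∫ y, G y ∂P x) ^ 2 ∂μ :=
        integral_variance_of_invariant hinv hGm hGL2.integrable_sq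
          (hsq.congr (hPG2.mono fun x hx => hx.symm))
    _ = ∫ x, (G x ^ 2 - (G x - g 0 x) ^ 2) ∂μ := by
        rw [integral_congr_ae hPG2, ← integral_sub hGL2.integrable_sq hsq]
    _ = ∫ x, (g 0 x ^ 2 + 2 * (g 0 x * (G x - g 0 x))) ∂μ :=
        integral_congr_ae (ae_of_all _ fun x => by ring)
    _ = _ := by
        rw [integral_add hg0L2.integrable_sq (hprod.const_mul 2), integral_const_mul]

end PoissonEquation

end AsymptoticVariance

open AsymptoticVariance

/-- Under stationarity and `μ(V₂²) < ∞`, the asymptotic variance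
`σ²(h) = Var_μ(h) + 2 Σ_{ℓ≥1} Cov_μ(h(X₀), h(X_ℓ))` is finite (the covariance series,
`Cov_μ(h(X₀), h(X_ℓ)) = ∫ h · Pˡh dμ`, is summable) and equals
`∫ μ(dx) ∫ P(x,dy) (G(y) − PG(x))²`. -/
theorem stmt_15 {X : Type*} [MeasurableSpace X] (P : Kernel X X) [IsMarkovKernel P]
    (μ : Measure X) [IsProbabilityMeasure μ] (hinv : μ.bind (fun x => P x) = μ)
    (V₁ V₂ : X → ℝ) (mV₁ : Measurable V₁) (mV₂ : Measurable V₂)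
    (h11 : ∀ x, 1 ≤ V₁ x) (h12 : ∀ x, V₁ x ≤ V₂ x) (c : ℝ)
    (hSRD : ∀ x, ∑' k : ℕ, Wnorm V₁ (dSM P μ k x) ≤ ENNReal.ofReal (c * V₂ x))
    (h : X → ℝ) (hm : Measurable h) (M : ℝ) (hM : ∀ x, |h x| ≤ M * V₁ x)
    (hmean : ∫ x, h x ∂μ = 0)
    (hV2sq : Integrable (fun x => V₂ x ^ 2) μ) :
    Summable (fun ℓ : ℕ => ∫ x, h x * ∫ y, h y ∂((kiter P (ℓ + 1)) x) ∂μ)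
    ∧ (∫ x, h x ^ 2 ∂μ)
        + 2 * ∑' ℓ : ℕ, ∫ x, h x * ∫ y, h y ∂((kiter P (ℓ + 1)) x) ∂μ
      = ∫ x, ∫ y, (Gfun P h y - ∫ z, Gfun P h z ∂(P x)) ^ 2 ∂(P x) ∂μ := by
  have hV₁0 : ∀ x, 0 ≤ V₁ x := fun x => zero_le_one.trans (h11 x)
  have hV₂ : MemLp V₂ 2 μ := (memLp_two_iff_integrable_sq mV₂.aestronglyMeasurable).2 hV2sq
  have hV₁ : Integrable V₁ μ := integrable_of_abs_le_mul (M := 1) (hV₂.integrable one_le_two) mV₁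
    fun x => by rw [one_mul, abs_of_nonneg (hV₁0 x)]; exact h12 x
  have horbit := summable_abs_integral_kiter mV₁ h11 h12 hV₁ hm hM hmean hSRD
  have hg := measurable_integral_kiter (P := P) hm
  have hsucc : ∀ n x, ∫ y, h y ∂(kiter P (n + 1) x) = ∫ z, ∫ y, h y ∂(kiter P n z) ∂P x :=
    fun n x => integral_kiter_succ
      (integrable_kiter mV₁ hV₁0 hV₁ hm hM (Wnorm_dSM_ne_top hSRD (n + 1) x))
  have hcov := hasSum_integral_mul_succ hg (fun x => (horbit x).1) (fun x => (horbit x).2) hV₂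
  have hvar := integral_integral_sq_sub_eq hinv hg hsucc (fun x => (horbit x).1)
    (fun x => (horbit x).2) hV₂
  simp only [integral_kiter_zero hm] at hcov hvar
  exact ⟨hcov.summable, by rw [hcov.tsum_eq]; exact hvar.symm⟩

end
end
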